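/- Strong isomorphism classifies equivalence of homomorphisms: with K₁, K₂ the reduced subspaces of linearly minimal dilations (π₁,...) and (π₂,...) of a finite-dimensional linear system, the homomorphisms π₁ and π₂ are equivalent (π₁(a) = R⁻¹π₂(a)R for some linear isomorphism R : W₁ → W₂ and all a) if and only if K₁ and K₂ are strongly isomorphic inside W = A⊗V. -/

import Mathlib

open scoped TensorProduct

variable (k : Type*) [Field k] (A : Type*) [Ring A] [Algebra k A]
  (V : Type*) [AddCommGroup V] [Module k V]

/-- The universal homomorphism `π_u(a)(b ⊗ x) = (ab) ⊗ x` on `A ⊗ V`. -/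
noncomputable def piU : A →ₐ[k] Module.End k (A ⊗[k] V) where
  toFun a := LinearMap.rTensor V (LinearMap.mulLeft k a)
  map_one' := by ext b v; simp
  map_mul' a b := by ext c v; simp [mul_assoc]
  map_zero' := by ext a v; simp
  map_add' a b := by ext c v; simp [add_mul, TensorProduct.add_tmul]
  commutes' c := by
    ext a v
    simp [Algebra.algebraMap_eq_smul_one, smul_mul_assoc, TensorProduct.smul_tmul']

/-- The universal analysis operator `T(x) = 1 ⊗ x`. -/
noncomputable def Tu : V →ₗ[k] A ⊗[k] V := TensorProduct.mk k A V 1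

/-- The universal synthesis operator `S(a ⊗ x) = φ(a) x`. -/
noncomputable def Su (φ : A →ₗ[k] Module.End k V) : A ⊗[k] V →ₗ[k] V :=
  TensorProduct.lift (φ : A →ₗ[k] V →ₗ[k] V)

/-- The linear map `A ⊗ V → W₁`, `a ⊗ x ↦ π₁(a) T₁ x`; its kernel is the reduced
subspace associated with the dilation system `(π₁, S₁, T₁, W₁)`. -/
noncomputable def Theta (W₁ : Type*) [AddCommGroup W₁] [Module k W₁]
    (π₁ : A →ₐ[k] Module.End k W₁) (T₁ : V →ₗ[k] W₁) : A ⊗[k] V →ₗ[k] W₁ :=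
  TensorProduct.lift ((LinearMap.lcomp k W₁ T₁) ∘ₗ π₁.toLinearMap)

/-!
Each `Θⱼ : A ⊗ V → Wⱼ`, `a ⊗ x ↦ πⱼ(a) Tⱼ x`, intertwines `π_u` with `πⱼ` and is onto by
linear minimality, so `Wⱼ ≅ (A ⊗ V) / Kⱼ` as `A`-modules. An automorphism of `A ⊗ V` carrying
`K₁` onto `K₂` descends to an isomorphism `W₁ ≅ W₂`, and the descended map intertwines `π₁`
and `π₂` exactly when all commutators `π_u(a) R - R π_u(a)` take values in `K₂`. Conversely,
every isomorphism `W₁ ≅ W₂` lifts along the two quotient maps: `A ⊗ V` is finite-dimensional,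
so `K₁` and `K₂` have the same dimension and `A ⊗ V ≅ Kⱼ × Wⱼ` compatibly with `Θⱼ`.
-/

namespace LinearMap

variable {R M W₁ W₂ : Type*} [Ring R] [AddCommGroup M] [Module R M]
  [AddCommGroup W₁] [Module R W₁] [AddCommGroup W₂] [Module R W₂]

theorem exists_linearEquiv_prod_ker_of_surjective [Module.Projective R W₁] (Θ : M →ₗ[R] W₁)
    (hΘ : Function.Surjective Θ) : ∃ e : M ≃ₗ[R] ker Θ × W₁, ∀ u, (e u).2 = Θ u := by
  obtain ⟨e, -, he⟩ :=
    (((exact_subtype_ker_map Θ).split_tfae (ker Θ).injective_subtype hΘ).out 0 2).1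
      (Θ.exists_rightInverse_of_surjective (range_eq_top.2 hΘ))
  exact ⟨e, fun u => (LinearMap.congr_fun he u).symm⟩

theorem exists_linearEquiv_comp_eq_iff_map_ker (Θ₁ : M →ₗ[R] W₁) (Θ₂ : M →ₗ[R] W₂)
    (h₁ : Function.Surjective Θ₁) (h₂ : Function.Surjective Θ₂) (e : M ≃ₗ[R] M) :
    (∃ f : W₁ ≃ₗ[R] W₂, ∀ u, f (Θ₁ u) = Θ₂ (e u)) ↔ (ker Θ₁).map (e : M →ₗ[R] M) = ker Θ₂ := by
  constructor
  · rintro ⟨f, hf⟩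
    have : ker Θ₁ = (ker Θ₂).comap (e : M →ₗ[R] M) := by
      ext u; simp [← hf]
    rw [this, Submodule.map_comap_eq_of_surjective e.surjective]
  · intro hmap
    refine ⟨(Θ₁.quotKerEquivOfSurjective h₁).symm ≪≫ₗ Submodule.Quotient.equiv _ _ e hmap ≪≫ₗ
      Θ₂.quotKerEquivOfSurjective h₂, fun u => by simp⟩

theorem intertwines_iff_commutator_mem_ker {ρ : M →ₗ[R] M}
    {σ₁ : W₁ →ₗ[R] W₁} {σ₂ : W₂ →ₗ[R] W₂} {Θ₁ : M →ₗ[R] W₁} {Θ₂ : M →ₗ[R] W₂}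
    (hΘ₁ : ∀ u, Θ₁ (ρ u) = σ₁ (Θ₁ u)) (hΘ₂ : ∀ u, Θ₂ (ρ u) = σ₂ (Θ₂ u))
    (h₁ : Function.Surjective Θ₁) {e : M →ₗ[R] M} {f : W₁ →ₗ[R] W₂}
    (hf : ∀ u, f (Θ₁ u) = Θ₂ (e u)) :
    (∀ w, f (σ₁ w) = σ₂ (f w)) ↔ ∀ u, ρ (e u) - e (ρ u) ∈ ker Θ₂ := by
  simp only [h₁.forall, mem_ker, map_sub, sub_eq_zero, hΘ₂, ← hΘ₁, hf]
  exact forall_congr' fun u => eq_comm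

end LinearMap

theorem LinearMap.exists_linearEquiv_comp_eq_of_surjective {K M W : Type*} [Field K]
    [AddCommGroup M] [Module K M] [FiniteDimensional K M] [AddCommGroup W] [Module K W]
    (Θ₁ Θ₂ : M →ₗ[K] W) (h₁ : Function.Surjective Θ₁) (h₂ : Function.Surjective Θ₂) :
    ∃ e : M ≃ₗ[K] M, ∀ u, Θ₂ (e u) = Θ₁ u := by
  obtain ⟨e₁, he₁⟩ := Θ₁.exists_linearEquiv_prod_ker_of_surjective h₁
  obtain ⟨e₂, he₂⟩ := Θ₂.exists_linearEquiv_prod_ker_of_surjective h₂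
  have hker : Module.finrank K (ker Θ₁) = Module.finrank K (ker Θ₂) := by
    have r₁ := Θ₁.finrank_range_add_finrank_ker
    have r₂ := Θ₂.finrank_range_add_finrank_ker
    rw [range_eq_top.2 h₁] at r₁
    rw [range_eq_top.2 h₂] at r₂
    omega
  refine ⟨e₁ ≪≫ₗ (LinearEquiv.ofFinrankEq _ _ hker).prodCongr (.refl K W) ≪≫ₗ e₂.symm,
    fun u => ?_⟩
  rw [LinearEquiv.trans_apply, ← he₂, LinearEquiv.apply_symm_apply, ← he₁]
  rfl

section Theta

variable (W : Type*) [AddCommGroup W] [Module k W] (π : A →ₐ[k] Module.End k W) (T : V →ₗ[k] W)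

theorem theta_piU (a : A) (w : A ⊗[k] V) :
    Theta k A V W π T (piU k A V a w) = π a (Theta k A V W π T w) := by
  induction w using TensorProduct.induction_on with
  | zero => simp
  | tmul b x => simp [Theta, piU, Module.End.mul_apply]
  | add u v hu hv => simp only [map_add, hu, hv]

theorem range_theta :
    LinearMap.range (Theta k A V W π T) =
      Submodule.span k {w : W | ∃ (a : A) (x : V), w = π a (T x)} := by
  rw [LinearMap.range_eq_map, ← TensorProduct.span_tmul_eq_top, Submodule.map_span]
  congr 1
  ext w
  simp [Theta, eq_comm]

end Theta

theorem homomorphisms_equivalent_iff_strongly_isomorphic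
    [FiniteDimensional k A] [FiniteDimensional k V]
    (W₁ : Type*) [AddCommGroup W₁] [Module k W₁]
    (W₂ : Type*) [AddCommGroup W₂] [Module k W₂]
    (π₁ : A →ₐ[k] Module.End k W₁) (T₁ : V →ₗ[k] W₁)
    (hmin₁ : Submodule.span k {w : W₁ | ∃ (a : A) (x : V), w = π₁ a (T₁ x)} = ⊤)
    (π₂ : A →ₐ[k] Module.End k W₂) (T₂ : V →ₗ[k] W₂)
    (hmin₂ : Submodule.span k {w : W₂ | ∃ (a : A) (x : V), w = π₂ a (T₂ x)} = ⊤) :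
    (∃ R : W₁ ≃ₗ[k] W₂, ∀ (a : A) (w : W₁), R (π₁ a w) = π₂ a (R w)) ↔
      ∃ R : (A ⊗[k] V) ≃ₗ[k] (A ⊗[k] V),
        (LinearMap.ker (Theta k A V W₁ π₁ T₁)).map (R : A ⊗[k] V →ₗ[k] A ⊗[k] V) =
          LinearMap.ker (Theta k A V W₂ π₂ T₂) ∧
        ∀ (a : A) (w : A ⊗[k] V),
          piU k A V a (R w) - R (piU k A V a w) ∈ LinearMap.ker (Theta k A V W₂ π₂ T₂) := by
  set Θ₁ := Theta k A V W₁ π₁ T₁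
  set Θ₂ := Theta k A V W₂ π₂ T₂
  have hs₁ : Function.Surjective Θ₁ :=
    LinearMap.range_eq_top.1 ((range_theta k A V W₁ π₁ T₁).trans hmin₁)
  have hs₂ : Function.Surjective Θ₂ :=
    LinearMap.range_eq_top.1 ((range_theta k A V W₂ π₂ T₂).trans hmin₂)
  have intertwines_iff {e : A ⊗[k] V →ₗ[k] A ⊗[k] V} {R : W₁ →ₗ[k] W₂}
      (hR : ∀ u, R (Θ₁ u) = Θ₂ (e u)) (a : A) :
      (∀ w, R (π₁ a w) = π₂ a (R w)) ↔
        ∀ u, piU k A V a (e u) - e (piU k A V a u) ∈ LinearMap.ker Θ₂ :=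
    LinearMap.intertwines_iff_commutator_mem_ker
      (theta_piU k A V W₁ π₁ T₁ a) (theta_piU k A V W₂ π₂ T₂ a) hs₁ hR
  constructor
  · rintro ⟨R, hR⟩
    obtain ⟨e, he⟩ := LinearMap.exists_linearEquiv_comp_eq_of_surjective
      ((R : W₁ →ₗ[k] W₂) ∘ₗ Θ₁) Θ₂ (R.surjective.comp hs₁) hs₂
    have hlift : ∀ u, R (Θ₁ u) = Θ₂ (e u) := fun u => (he u).symm
    exact ⟨e, (LinearMap.exists_linearEquiv_comp_eq_iff_map_ker Θ₁ Θ₂ hs₁ hs₂ e).1 ⟨R, hlift⟩,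
      fun a => (intertwines_iff (R := R) hlift a).1 (hR a)⟩
  · rintro ⟨e, hmap, hcomm⟩
    obtain ⟨R, hR⟩ := (LinearMap.exists_linearEquiv_comp_eq_iff_map_ker Θ₁ Θ₂ hs₁ hs₂ e).2 hmap
    exact ⟨R, fun a => (intertwines_iff (R := R) hR a).2 (hcomm a)⟩
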